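/- Let F be a group, let G₁,…,G_k be finite irreducible F-groups such that G_i and G_j are not isomorphic as F-groups for i ≠ j, and let m₁,…,m_k be non-negative integers. If G_j is non-abelian, then the number of surjective F-group morphisms from ∏_{i=1}^k G_i^{m_i} to G_j equals m_j · |Aut_F(G_j)|, where Aut_F(G_j) is the group of F-group automorphisms of G_j. -/

import Mathlib

section FGroupDefs

variable (F : Type*) [Group F]

/-- A subgroup of an `F`-group is a *normal `F`-subgroup* if it is normal and
stable under the `F`-action. -/
def IsNormalFSubgroup {G : Type*} [Group G] [MulDistribMulAction F G]
    (H : Subgroup G) : Prop :=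
  H.Normal ∧ ∀ (f : F) (x : G), x ∈ H → f • x ∈ H

/-- An *irreducible `F`-group* is a nontrivial `F`-group whose only normal
`F`-subgroups are the trivial subgroup and the whole group. -/
def IsIrreducibleFGroup (G : Type*) [Group G] [MulDistribMulAction F G] : Prop :=
  Nontrivial G ∧ ∀ H : Subgroup G, IsNormalFSubgroup F H → H = ⊥ ∨ H = ⊤

/-- `[s]_F`: the smallest normal `F`-subgroup containing the set `s`. -/
def normalFClosure {G : Type*} [Group G] [MulDistribMulAction F G] (s : Set G) :
    Subgroup G :=
  sInf {H : Subgroup G | IsNormalFSubgroup F H ∧ s ⊆ H}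

/-- A group homomorphism is an `F`-group morphism if it commutes with the `F`-actions. -/
def IsFHom {G G' : Type*} [Group G] [Group G'] [MulDistribMulAction F G]
    [MulDistribMulAction F G'] (φ : G →* G') : Prop :=
  ∀ (f : F) (x : G), φ (f • x) = f • φ x

/-- `h_F(G)`: the number of `F`-group endomorphisms of `G`. -/
noncomputable def hF (G : Type*) [Group G] [MulDistribMulAction F G] : ℕ :=
  Nat.card {φ : G →* G // IsFHom F φ}

/-- Two `F`-groups are isomorphic if there is a bijective group homomorphism
between them commuting with the `F`-actions. -/
def IsFIso (G G' : Type*) [Group G] [Group G'] [MulDistribMulAction F G]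
    [MulDistribMulAction F G'] : Prop :=
  ∃ e : G ≃* G', ∀ (f : F) (x : G), e (f • x) = f • e x

end FGroupDefs

/-!
A surjective `F`-morphism `φ` from a product of irreducible `F`-groups onto a non-abelian
irreducible `F`-group `G` maps each coordinate factor onto a normal `F`-subgroup of `G`, hence
onto `1` or onto `G`. The factors generate the product, so some factor `H a` is mapped onto `G`,
and by irreducibility of `H a` this restriction is an `F`-isomorphism. Everything with trivial
`a`-coordinate commutes with that factor, so `φ` maps it into the centre of `G`, which is trivial.
Thus `φ` is an `F`-isomorphism `H a ≃ G` composed with the projection onto `H a`: the surjections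
correspond to pairs of a coordinate and an `F`-isomorphism, and only the `m j` coordinates where
the factor is `G j` admit one.
-/

open Function

abbrev FEquiv (F H G : Type*) [Group F] [Group H] [Group G] [MulDistribMulAction F H]
    [MulDistribMulAction F G] : Type _ :=
  {e : H ≃* G // ∀ (f : F) (x : H), e (f • x) = f • e x}

section FGroup

variable {F G H : Type*} [Group F] [Group G] [Group H] [MulDistribMulAction F G]
  [MulDistribMulAction F H]

theorem IsIrreducibleFGroup.center_eq_bot (hG : IsIrreducibleFGroup F G)
    (hna : ¬ ∀ a b : G, a * b = b * a) : Subgroup.center G = ⊥ := by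
  have hcenter : IsNormalFSubgroup F (Subgroup.center G) := by
    refine ⟨inferInstance, fun f x hx => Subgroup.mem_center_iff.2 fun g => ?_⟩
    calc g * f • x = f • (f⁻¹ • g * x) := by rw [smul_mul', smul_inv_smul]
      _ = f • (x * f⁻¹ • g) := by rw [Subgroup.mem_center_iff.1 hx]
      _ = f • x * g := by rw [smul_mul', smul_inv_smul]
  refine (hG.2 _ hcenter).resolve_right fun htop => hna fun a b => ?_
  exact Subgroup.mem_center_iff.1 (htop ▸ Subgroup.mem_top b) a

theorem IsFHom.isNormalFSubgroup_ker {φ : H →* G} (hφ : IsFHom F φ) :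
    IsNormalFSubgroup F φ.ker :=
  ⟨φ.normal_ker, fun f x hx => by rw [MonoidHom.mem_ker, hφ, MonoidHom.mem_ker.1 hx, smul_one]⟩

theorem IsNormalFSubgroup.map {N : Subgroup H} (hN : IsNormalFSubgroup F N) {φ : H →* G}
    (hφ : IsFHom F φ) (hsurj : Surjective φ) : IsNormalFSubgroup F (N.map φ) := by
  refine ⟨hN.1.map φ hsurj, ?_⟩
  rintro f _ ⟨x, hx, rfl⟩
  exact ⟨f • x, hN.2 f x hx, hφ f x⟩

theorem IsIrreducibleFGroup.injective_of_surjective [Nontrivial G]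
    (hH : IsIrreducibleFGroup F H) {φ : H →* G} (hφ : IsFHom F φ) (hsurj : Surjective φ) :
    Injective φ := by
  refine (MonoidHom.ker_eq_bot_iff φ).1 ((hH.2 _ hφ.isNormalFSubgroup_ker).resolve_right ?_)
  intro htop
  obtain ⟨y, hy⟩ := exists_ne (1 : G)
  obtain ⟨x, rfl⟩ := hsurj y
  exact hy (MonoidHom.mem_ker.1 (htop ▸ Subgroup.mem_top x))

theorem isFHom_comp_mulEquiv_iff {H' : Type*} [Group H'] [MulDistribMulAction F H']
    (e : H ≃* H') (he : ∀ (f : F) (x : H), e (f • x) = f • e x) (φ : H' →* G) :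
    IsFHom F (φ.comp e.toMonoidHom) ↔ IsFHom F φ := by
  simp only [IsFHom, MonoidHom.comp_apply, MulEquiv.coe_toMonoidHom, he]
  exact forall_congr' fun f => (e.surjective.forall (p := fun y => φ (f • y) = f • φ y)).symm

theorem Nat.card_surjective_fHom_congr {H' : Type*} [Group H'] [MulDistribMulAction F H']
    (e : H ≃* H') (he : ∀ (f : F) (x : H), e (f • x) = f • e x) :
    Nat.card {φ : H →* G // IsFHom F φ ∧ Surjective φ} =
      Nat.card {φ : H' →* G // IsFHom F φ ∧ Surjective φ} := by
  refine (Nat.card_congr (Equiv.subtypeEquiv e.symm.monoidHomCongrLeftEquiv fun φ => ?_)).symm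
  have hcomp : e.symm.monoidHomCongrLeftEquiv φ = φ.comp e.toMonoidHom := rfl
  rw [hcomp, isFHom_comp_mulEquiv_iff e he, MonoidHom.coe_comp, MulEquiv.coe_toMonoidHom,
    e.surjective.of_comp_iff]

end FGroup

section Pi

variable {F α G : Type*} {H : α → Type*} [Group F] [Group G] [MulDistribMulAction F G]
  [∀ a, Group (H a)] [∀ a, MulDistribMulAction F (H a)]

theorem Pi.mul_mulSingle_mul_inv [DecidableEq α] (x : ∀ a, H a) (a : α) (g : H a) :
    x * Pi.mulSingle a g * x⁻¹ = Pi.mulSingle a (x a * g * (x a)⁻¹) :=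
  funext fun b => Pi.apply_mulSingle (fun b y => x b * y * (x b)⁻¹) (fun b => by group) a g b

theorem Pi.smul_mulSingle [DecidableEq α] (f : F) (a : α) (g : H a) :
    f • Pi.mulSingle a g = Pi.mulSingle a (f • g) :=
  funext fun b => Pi.apply_mulSingle (fun _ y => f • y) (fun _ => smul_one f) a g b

theorem Pi.commute_mulSingle_of_apply_eq_one [DecidableEq α] {x : ∀ a, H a} {a : α}
    (hx : x a = 1) (g : H a) : Commute x (Pi.mulSingle a g) := by
  funext b
  rcases eq_or_ne b a with rfl | hb
  · simp [hx]
  · simp [Pi.mulSingle_eq_of_ne hb]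

theorem isNormalFSubgroup_range_mulSingle [DecidableEq α] (a : α) :
    IsNormalFSubgroup F (MonoidHom.mulSingle H a).range := by
  refine ⟨⟨?_⟩, ?_⟩
  · rintro _ ⟨g, rfl⟩ x
    exact ⟨_, (Pi.mul_mulSingle_mul_inv x a g).symm⟩
  · rintro f _ ⟨g, rfl⟩
    exact ⟨f • g, (Pi.smul_mulSingle f a g).symm⟩

theorem IsFHom.comp_mulSingle [DecidableEq α] {φ : (∀ a, H a) →* G} (hφ : IsFHom F φ) (a : α) :
    IsFHom F (φ.comp (MonoidHom.mulSingle H a)) := fun f g => by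
  simp only [MonoidHom.comp_apply, MonoidHom.mulSingle_apply, ← Pi.smul_mulSingle]
  exact hφ f _

theorem IsFHom.exists_surjective_comp_mulSingle [DecidableEq α] [Finite α]
    (hG : IsIrreducibleFGroup F G) {φ : (∀ a, H a) →* G} (hφ : IsFHom F φ)
    (hsurj : Surjective φ) : ∃ a, Surjective (φ.comp (MonoidHom.mulSingle H a)) := by
  have := hG.1
  by_contra! hnone
  -- each factor is mapped onto a normal `F`-subgroup of `G`, which cannot be all of `G`
  have hkill : ∀ a, φ.comp (MonoidHom.mulSingle H a) = 1 := fun a => by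
    have himage := (isNormalFSubgroup_range_mulSingle a).map hφ hsurj
    rw [MonoidHom.map_range] at himage
    exact MonoidHom.range_eq_bot_iff.1 <| (hG.2 _ himage).resolve_right fun htop =>
      hnone a (MonoidHom.range_eq_top.1 htop)
  obtain ⟨y, hy⟩ := exists_ne (1 : G)
  obtain ⟨x, rfl⟩ := hsurj y
  exact hy (Subgroup.pi_mem_of_mulSingle_mem (H := φ.ker) x fun a =>
    DFunLike.congr_fun (hkill a) (x a))

theorem eq_comp_eval_of_surjective_comp_mulSingle [DecidableEq α]
    (hG : Subgroup.center G = ⊥) {φ : (∀ a, H a) →* G} {a : α}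
    (ha : Surjective (φ.comp (MonoidHom.mulSingle H a))) :
    φ = (φ.comp (MonoidHom.mulSingle H a)).comp (Pi.evalMonoidHom H a) := by
  refine MonoidHom.ext fun x => ?_
  set y := (Pi.mulSingle a (x a))⁻¹ * x with hy
  have hya : y a = 1 := by simp [y]
  have hcentral : φ y ∈ Subgroup.center G := Subgroup.mem_center_iff.2 fun g => by
    obtain ⟨h, rfl⟩ := ha g
    exact ((Pi.commute_mulSingle_of_apply_eq_one hya h).map φ).eq.symm
  rw [hG, Subgroup.mem_bot] at hcentral
  calc φ x = φ (Pi.mulSingle a (x a) * y) := by rw [hy, mul_inv_cancel_left]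
    _ = φ (Pi.mulSingle a (x a)) := by rw [map_mul, hcentral, mul_one]

def surjectiveFHomOfFEquiv (p : Σ a, FEquiv F (H a) G) :
    {φ : (∀ a, H a) →* G // IsFHom F φ ∧ Surjective φ} :=
  ⟨p.2.1.toMonoidHom.comp (Pi.evalMonoidHom H p.1), fun f x => p.2.2 f (x p.1),
    p.2.1.surjective.comp (surjective_eval p.1)⟩

theorem surjectiveFHomOfFEquiv_injective [Nontrivial G] :
    Injective (surjectiveFHomOfFEquiv (F := F) (H := H) (G := G)) := by
  classical
  rintro ⟨a, e⟩ ⟨b, e'⟩ h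
  have happ : ∀ x : ∀ a, H a, e.1 (x a) = e'.1 (x b) := fun x =>
    DFunLike.congr_fun (congrArg Subtype.val h) x
  obtain rfl : a = b := by
    by_contra hab
    obtain ⟨y, hy⟩ := exists_ne (1 : G)
    have := happ (Pi.mulSingle a (e.1.symm y))
    simp [Pi.mulSingle_eq_of_ne' hab] at this
    exact hy this
  obtain rfl : e = e' := Subtype.ext (MulEquiv.ext fun g => by simpa using happ (Pi.mulSingle a g))
  rfl

theorem surjectiveFHomOfFEquiv_surjective [Finite α] (hH : ∀ a, IsIrreducibleFGroup F (H a))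
    (hG : IsIrreducibleFGroup F G) (hcenter : Subgroup.center G = ⊥) :
    Surjective (surjectiveFHomOfFEquiv (F := F) (H := H) (G := G)) := by
  classical
  rintro ⟨φ, hφ, hsurj⟩
  have := hG.1
  obtain ⟨a, ha⟩ := hφ.exists_surjective_comp_mulSingle hG hsurj
  have hinj := (hH a).injective_of_surjective (hφ.comp_mulSingle a) ha
  refine ⟨⟨a, MulEquiv.ofBijective _ ⟨hinj, ha⟩, hφ.comp_mulSingle a⟩, Subtype.ext ?_⟩
  exact (eq_comp_eval_of_surjective_comp_mulSingle hcenter ha).symm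

theorem Nat.card_surjective_fHom_pi [Finite α] (hH : ∀ a, IsIrreducibleFGroup F (H a))
    (hG : IsIrreducibleFGroup F G) (hcenter : Subgroup.center G = ⊥) :
    Nat.card {φ : (∀ a, H a) →* G // IsFHom F φ ∧ Surjective φ} =
      Nat.card (Σ a, FEquiv F (H a) G) :=
  have := hG.1
  (Nat.card_congr (Equiv.ofBijective _
    ⟨surjectiveFHomOfFEquiv_injective, surjectiveFHomOfFEquiv_surjective hH hG hcenter⟩)).symm

end Pi

def MulEquiv.piCurry {α : Type*} {β : α → Type*} (γ : ∀ a, β a → Type*) [∀ a b, Mul (γ a b)] :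
    (∀ x : Σ a, β a, γ x.1 x.2) ≃* ∀ a b, γ a b :=
  { Equiv.piCurry γ with map_mul' := fun _ _ => rfl }

theorem Nat.card_sigma_sigma_of_isEmpty {ι : Type*} {κ X : ι → Type*} {j : ι}
    (hX : ∀ i, i ≠ j → IsEmpty (X i)) :
    Nat.card (Σ p : Σ i, κ i, X p.1) = Nat.card (κ j) * Nat.card (X j) := by
  rw [← Nat.card_prod]
  refine (Nat.card_congr (Equiv.ofBijective (fun p => ⟨⟨j, p.1⟩, p.2⟩) ⟨?_, ?_⟩)).symm
  · rintro ⟨t, x⟩ ⟨t', x'⟩ h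
    simp only [Sigma.mk.injEq, heq_eq_eq, true_and] at h
    obtain ⟨rfl, rfl⟩ := h
    rfl
  · rintro ⟨⟨i, t⟩, x⟩
    obtain rfl : i = j := by_contra fun hij => (hX i hij).false x
    exact ⟨(t, x), rfl⟩

theorem count_surjections_nonabelian_general
    {F : Type*} [Group F] {k : ℕ} (G : Fin k → Type*)
    [∀ i, Group (G i)] [∀ i, MulDistribMulAction F (G i)]
    (hirr : ∀ i, IsIrreducibleFGroup F (G i))
    (hnoniso : ∀ i j, i ≠ j → ¬ IsFIso F (G i) (G j))
    (m : Fin k → ℕ) (j : Fin k)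
    (hna : ¬ ∀ a b : G j, a * b = b * a) :
    Nat.card {φ : (∀ i, Fin (m i) → G i) →* G j //
        IsFHom F φ ∧ Function.Surjective φ} =
      m j * Nat.card {e : G j ≃* G j // ∀ (f : F) (x : G j), e (f • x) = f • e x} := by
  have hnoFEquiv : ∀ i, i ≠ j → IsEmpty (FEquiv F (G i) (G j)) := fun i hij =>
    ⟨fun e => hnoniso i j hij ⟨e.1, e.2⟩⟩
  rw [← Nat.card_surjective_fHom_congr (MulEquiv.piCurry fun i (_ : Fin (m i)) => G i)
      fun _ _ => rfl,
    Nat.card_surjective_fHom_pi (fun p => hirr p.1) (hirr j) ((hirr j).center_eq_bot hna),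
    Nat.card_sigma_sigma_of_isEmpty (X := fun i => FEquiv F (G i) (G j)) hnoFEquiv, Nat.card_fin]

/-- the number of surjective `F`-group morphisms
`∏ᵢ Gᵢ^{mᵢ} → G_j` with `G_j` non-abelian is `m_j · |Aut_F(G_j)|`. -/
theorem count_surjections_nonabelian
    {F : Type*} [Group F] {k : ℕ} (G : Fin k → Type*)
    [∀ i, Group (G i)] [∀ i, MulDistribMulAction F (G i)] [∀ i, Finite (G i)]
    (hirr : ∀ i, IsIrreducibleFGroup F (G i))
    (hnoniso : ∀ i j, i ≠ j → ¬ IsFIso F (G i) (G j))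
    (m : Fin k → ℕ) (j : Fin k)
    (hna : ¬ ∀ a b : G j, a * b = b * a) :
    Nat.card {φ : (∀ i, Fin (m i) → G i) →* G j //
        IsFHom F φ ∧ Function.Surjective φ} =
      m j * Nat.card {e : G j ≃* G j // ∀ (f : F) (x : G j), e (f • x) = f • e x} :=
  count_surjections_nonabelian_general G hirr hnoniso m j hna
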